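/- arXiv:2402.14383 — 4 statements merged into one kernel-verified Lean document; each statement's English description precedes it below -/
import Mathlib

section
/- Let a > 0, let J be a closed interval, let g : J → ℝ be differentiable with a - δ < g'(x) < a + δ for all x ∈ J, where 0 < δ < a/5. Suppose w ∈ J satisfies g(w) = 0 and x ∈ J satisfies N(g,x) := x - g(x)/g'(x) ∈ J. Then |w - N(g,x)| ≤ |w - x|/2. -/
open Set

/-- Newton map: N(g,x) = x - g(x)/g'(x). -/
noncomputable def newton (g g' : ℝ → ℝ) (x : ℝ) : ℝ := x - g x / g' x

/-- Claim 1 of the paper: if g' is within δ of a > 0 on J, with δ < a/5, and w ∈ J is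
a root of g, then the Newton step from any x ∈ J (whose Newton image lies in J) moves
at least twice as close to w. -/
theorem stmt1 (a δ : ℝ) (ha : 0 < a) (hδ0 : 0 < δ) (hδ : δ < a / 5)
    (c d : ℝ) (hcd : c ≤ d) (g g' : ℝ → ℝ)
    (hg : ∀ t ∈ Icc c d, HasDerivWithinAt g (g' t) (Icc c d) t)
    (hg' : ∀ t ∈ Icc c d, a - δ < g' t ∧ g' t < a + δ)
    (w : ℝ) (hw : w ∈ Icc c d) (hgw : g w = 0)
    (x : ℝ) (hx : x ∈ Icc c d) (hNx : newton g g' x ∈ Icc c d) :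
    |w - newton g g' x| ≤ |w - x| / 2 := by
  have hgx := hg' x hx
  have hgxpos : 0 < g' x := by nlinarith [hgx.1]
  have hgx_ne : g' x ≠ 0 := ne_of_gt hgxpos
  by_cases hwx : w = x
  · subst hwx
    simp [newton, hgw]
  have hmvt : ∃ ξ ∈ Icc c d, g x - g w = g' ξ * (x - w) := by
    rcases lt_or_gt_of_ne hwx with h | h
    · obtain ⟨ξ, hξ, hder⟩ := exists_hasDerivAt_eq_slope g g' h
        (fun t ht => ((hg t ⟨hw.1.trans ht.1, ht.2.trans hx.2⟩).continuousWithinAt).mono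
          (Icc_subset_Icc hw.1 hx.2))
        (fun t ht => by
          have htm : t ∈ Ioo c d := ⟨lt_of_le_of_lt hw.1 ht.1, lt_of_lt_of_le ht.2 hx.2⟩
          exact (hg t (Ioo_subset_Icc_self htm)).hasDerivAt (Icc_mem_nhds htm.1 htm.2))
      refine ⟨ξ, ⟨le_trans hw.1 hξ.1.le, le_trans hξ.2.le hx.2⟩, ?_⟩
      rw [hder, div_mul_cancel₀ _ (sub_ne_zero.mpr h.ne')]
    · obtain ⟨ξ, hξ, hder⟩ := exists_hasDerivAt_eq_slope g g' h
        (fun t ht => ((hg t ⟨hx.1.trans ht.1, ht.2.trans hw.2⟩).continuousWithinAt).mono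
          (Icc_subset_Icc hx.1 hw.2))
        (fun t ht => by
          have htm : t ∈ Ioo c d := ⟨lt_of_le_of_lt hx.1 ht.1, lt_of_lt_of_le ht.2 hw.2⟩
          exact (hg t (Ioo_subset_Icc_self htm)).hasDerivAt (Icc_mem_nhds htm.1 htm.2))
      refine ⟨ξ, ⟨le_trans hx.1 hξ.1.le, le_trans hξ.2.le hw.2⟩, ?_⟩
      rw [hder]
      have hwx' : w - x ≠ 0 := sub_ne_zero.mpr (ne_of_gt h)
      field_simp
      ring
  obtain ⟨ξ, hξmem, hval⟩ := hmvt
  have hgξ := hg' ξ hξmem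
  rw [hgw, sub_zero] at hval
  have key : w - newton g g' x = (w - x) * (g' x - g' ξ) / g' x := by
    unfold newton
    rw [hval]
    field_simp
    ring
  rw [key, abs_div, abs_mul, abs_of_pos hgxpos,
    div_le_div_iff₀ hgxpos (by norm_num : (0:ℝ) < 2)]
  have hdiff : |g' x - g' ξ| ≤ 2 * δ :=
    abs_le.mpr ⟨by linarith [hgx.1, hgξ.2], by linarith [hgx.2, hgξ.1]⟩
  nlinarith [abs_nonneg (w - x), abs_nonneg (g' x - g' ξ),
    mul_nonneg (abs_nonneg (w - x)) (abs_nonneg (g' x - g' ξ))]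
end

section
/- Let f ∈ C¹(M) be affine and nonconstant on a nondegenerate closed interval J ⊆ [-M,M], and suppose f(z) = 0 for some z in the interior of J. Then there exists δ > 0 such that for every x ∈ J and every g ∈ C¹(M) with d₁(f,g) < δ, the Newton sequence τ(g,x) (defined by x₀ = x, x_{n+1} = N(g,x_n)) is well-defined, all its terms lie in J, and it converges to a root of g. -/
open Set Filter

/-- Newton sequence: x₀ = x, x_{n+1} = N(g, x_n). -/
noncomputable def newtonSeq (g g' : ℝ → ℝ) (x : ℝ) : ℕ → ℝ
  | 0 => x
  | n + 1 => newton g g' (newtonSeq g g' x n)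

set_option maxHeartbeats 1000000 in
/-- Proposition (Dudák): if f ∈ C¹(M) is affine nonconstant on a nondegenerate closed
interval J = [c,d] ⊆ [-M,M] and has a root z in the interior of J, then there is δ > 0
such that for every g ∈ C¹(M) with d₁(f,g) < δ and every x ∈ J, the Newton sequence
τ(g,x) is well-defined, all its terms lie in J, and it converges to a root of g. -/
theorem stmt2 (M : ℝ) (hM : 0 < M) (f f' : ℝ → ℝ)
    (hf : ∀ t ∈ Icc (-M) M, HasDerivWithinAt f (f' t) (Icc (-M) M) t)
    (hf' : ContinuousOn f' (Icc (-M) M))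
    (c d : ℝ) (hcd : c < d) (hJ : Icc c d ⊆ Icc (-M) M)
    (a b : ℝ) (ha : a ≠ 0)
    (haff : ∀ t ∈ Icc c d, f t = a * t + b ∧ f' t = a)
    (z : ℝ) (hz : z ∈ Ioo c d) (hfz : f z = 0) :
    ∃ δ > 0, ∀ g g' : ℝ → ℝ,
      (∀ t ∈ Icc (-M) M, HasDerivWithinAt g (g' t) (Icc (-M) M) t) →
      ContinuousOn g' (Icc (-M) M) →
      (∀ t ∈ Icc (-M) M, |f t - g t| + |f' t - g' t| < δ) →
      ∀ x ∈ Icc c d,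
        (∀ n : ℕ, newtonSeq g g' x n ∈ Icc c d ∧ g' (newtonSeq g g' x n) ≠ 0) ∧
        ∃ w ∈ Icc (-M) M, g w = 0 ∧
          Tendsto (newtonSeq g g' x) atTop (nhds w) := by
  have hzJ : z ∈ Icc c d := Ioo_subset_Icc_self hz
  have hab : b = -a * z := by
    have h1 := (haff z hzJ).1
    have : a * z + b = 0 := by rw [← h1]; exact hfz
    linarith
  set K := |a| with hKdef
  have hK0 : 0 < K := abs_pos.mpr ha
  have hKsq : K ^ 2 = a ^ 2 := sq_abs a
  set s := min (z - c) (d - z) / 2 with hsdef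
  have hs0 : 0 < s :=
    div_pos (lt_min (by linarith [hz.1]) (by linarith [hz.2])) two_pos
  have h2s1 : 2 * s ≤ z - c := by
    have := min_le_left (z - c) (d - z); rw [hsdef]; linarith
  have h2s2 : 2 * s ≤ d - z := by
    have := min_le_right (z - c) (d - z); rw [hsdef]; linarith
  set lam := min (1/2 : ℝ) (s / (d - c)) with hlamdef
  have hlam0 : 0 < lam := lt_min (by norm_num) (div_pos hs0 (by linarith))
  have hlam_half : lam ≤ 1/2 := min_le_left _ _
  have hlamdc : lam * (d - c) ≤ s := by
    have h := min_le_right (1/2 : ℝ) (s / (d - c))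
    have : lam * (d - c) ≤ (s / (d - c)) * (d - c) :=
      mul_le_mul_of_nonneg_right h (by linarith)
    rwa [div_mul_cancel₀ s (by linarith : d - c ≠ 0)] at this
  refine ⟨min (K * s / 2) (lam * K / 4), lt_min (by positivity) (by positivity), ?_⟩
  set δ := min (K * s / 2) (lam * K / 4) with hδdef
  have hδ0 : 0 < δ := lt_min (by positivity) (by positivity)
  have hδ1 : δ ≤ K * s / 2 := min_le_left _ _
  have hδ2 : δ ≤ lam * K / 4 := min_le_right _ _
  have hδK : δ ≤ K / 2 := by nlinarith
  intro g g' hg hg' hclose x hx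
  -- g' is close to a on J
  have hg'a : ∀ t ∈ Icc c d, |g' t - a| < δ := by
    intro t ht
    have h1 := hclose t (hJ ht)
    have h2 := (haff t ht).2
    have h3 : |g' t - a| = |f' t - g' t| := by rw [← h2, abs_sub_comm]
    have := abs_nonneg (f t - g t)
    linarith
  have hgclose : ∀ t ∈ Icc c d, |f t - g t| < δ := by
    intro t ht
    have h1 := hclose t (hJ ht)
    have := abs_nonneg (f' t - g' t)
    linarith
  have hg'lb : ∀ t ∈ Icc c d, K / 2 ≤ |g' t| := by
    intro t ht
    have h1 := hg'a t ht
    have h2 := abs_sub_abs_le_abs_sub a (g' t)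
    rw [abs_sub_comm] at h1
    linarith
  have hg'ne : ∀ t ∈ Icc c d, g' t ≠ 0 := by
    intro t ht h0
    have := hg'lb t ht
    rw [h0, abs_zero] at this
    linarith
  -- membership of z ± s
  have hzm : z - s ∈ Icc c d := ⟨by linarith, by linarith⟩
  have hzp : z + s ∈ Icc c d := ⟨by linarith, by linarith⟩
  have hcontg : ContinuousOn g (Icc c d) := fun t ht =>
    ((hg t (hJ ht)).continuousWithinAt).mono hJ
  -- root of g by IVT
  have hfval : ∀ t ∈ Icc c d, f t = a * (t - z) := by
    intro t ht
    rw [(haff t ht).1, hab]; ring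
  have hsign : ∀ t ∈ Icc c d, a * g t ≥ a * f t - K * δ := by
    intro t ht
    have h1 := hgclose t ht
    have h2 : |a * (f t - g t)| < K * δ := by
      rw [abs_mul, ← hKdef]
      exact mul_lt_mul_of_pos_left h1 hK0
    have h3 := le_abs_self (a * (f t - g t))
    have h4 : a * (f t - g t) = a * f t - a * g t := by ring
    linarith
  have hsign' : ∀ t ∈ Icc c d, a * g t ≤ a * f t + K * δ := by
    intro t ht
    have h1 := hgclose t ht
    have h2 : |a * (f t - g t)| < K * δ := by
      rw [abs_mul, ← hKdef]
      exact mul_lt_mul_of_pos_left h1 hK0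
    have h3 := neg_abs_le (a * (f t - g t))
    have h4 : a * (f t - g t) = a * f t - a * g t := by ring
    linarith
  have hppos : 0 ≤ a * g (z + s) := by
    have h1 := hsign (z + s) hzp
    have h2 := hfval (z + s) hzp
    rw [h2] at h1
    nlinarith
  have hnneg : a * g (z - s) ≤ 0 := by
    have h1 := hsign' (z - s) hzm
    have h2 := hfval (z - s) hzm
    rw [h2] at h1
    nlinarith
  have hconta : ContinuousOn (fun t => a * g t) (Icc (z - s) (z + s)) :=
    (continuousOn_const.mul hcontg).mono (Icc_subset_Icc hzm.1 hzp.2)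
  have hIVT : (0 : ℝ) ∈ (fun t => a * g t) '' Icc (z - s) (z + s) :=
    intermediate_value_Icc (by linarith) hconta ⟨hnneg, hppos⟩
  obtain ⟨w, hw, hgw⟩ := hIVT
  have hgw0 : g w = 0 := by
    have : a * g w = 0 := hgw
    rcases mul_eq_zero.mp this with h | h
    · exact absurd h ha
    · exact h
  have hwJ : w ∈ Icc c d := ⟨by linarith [hw.1], by linarith [hw.2]⟩
  -- MVT-type inequality
  have key : ∀ x₀ ∈ Icc c d, |g w - g x₀ - g' x₀ * (w - x₀)| ≤ (2 * δ) * |w - x₀| := by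
    intro x₀ hx₀
    have hder : ∀ t ∈ Icc c d,
        HasDerivWithinAt (fun u => g u - g' x₀ * u) (g' t - g' x₀) (Icc c d) t := by
      intro t ht
      have h1 := (hg t (hJ ht)).mono hJ
      have h2 : HasDerivWithinAt (fun u => g' x₀ * u) (g' x₀) (Icc c d) t := by
        simpa using (hasDerivWithinAt_id t (Icc c d)).const_mul (g' x₀)
      exact h1.sub h2
    have hbd : ∀ t ∈ Icc c d, ‖g' t - g' x₀‖ ≤ 2 * δ := by
      intro t ht
      have h1 := hg'a t ht
      have h2 := hg'a x₀ hx₀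
      have : |g' t - g' x₀| ≤ |g' t - a| + |g' x₀ - a| := by
        have := abs_sub_le (g' t) a (g' x₀)
        rwa [abs_sub_comm a (g' x₀)] at this
      rw [Real.norm_eq_abs]
      linarith
    have := (convex_Icc c d).norm_image_sub_le_of_norm_hasDerivWithin_le hder hbd hx₀ hwJ
    have heq : (g w - g' x₀ * w) - (g x₀ - g' x₀ * x₀) = g w - g x₀ - g' x₀ * (w - x₀) := by
      ring
    rw [Real.norm_eq_abs, Real.norm_eq_abs, heq] at this
    exact this
  -- contraction step
  have hstep : ∀ x₀ ∈ Icc c d,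
      newton g g' x₀ ∈ Icc c d ∧ |newton g g' x₀ - w| ≤ lam * |x₀ - w| := by
    intro x₀ hx₀
    have hne := hg'ne x₀ hx₀
    have hsub : newton g g' x₀ - w =
        (g w - g x₀ - g' x₀ * (w - x₀)) / g' x₀ := by
      rw [newton, hgw0]; field_simp; ring
    have h1 : |newton g g' x₀ - w| ≤ (2 * δ) * |w - x₀| / (K / 2) := by
      rw [hsub, abs_div]
      have hnum := key x₀ hx₀
      have hden := hg'lb x₀ hx₀
      exact div_le_div₀ (by positivity) hnum (by positivity) hden
    have h2 : (2 * δ) * |w - x₀| / (K / 2) ≤ lam * |x₀ - w| := by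
      rw [abs_sub_comm w x₀, div_le_iff₀ (by positivity : (0:ℝ) < K / 2)]
      have h25 : (2 * δ) * |x₀ - w| ≤ (lam * (K / 2)) * |x₀ - w| :=
        mul_le_mul_of_nonneg_right (by linarith) (abs_nonneg _)
      linarith [h25]
    have hcontr : |newton g g' x₀ - w| ≤ lam * |x₀ - w| := h1.trans h2
    have hxw : |x₀ - w| ≤ d - c := by
      rw [abs_le]
      constructor <;> [linarith [hx₀.1, hwJ.2]; linarith [hx₀.2, hwJ.1]]
    have hclose' : |newton g g' x₀ - w| ≤ s := by
      calc |newton g g' x₀ - w| ≤ lam * |x₀ - w| := hcontr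
        _ ≤ lam * (d - c) := mul_le_mul_of_nonneg_left hxw (le_of_lt hlam0)
        _ ≤ s := hlamdc
    have habs := abs_le.mp hclose'
    refine ⟨⟨?_, ?_⟩, hcontr⟩
    · have := hw.1; linarith [habs.1]
    · have := hw.2; linarith [habs.2]
  -- induction on the sequence
  have hseq : ∀ n : ℕ, newtonSeq g g' x n ∈ Icc c d ∧
      |newtonSeq g g' x n - w| ≤ (1/2 : ℝ) ^ n * (d - c) := by
    intro n
    induction n with
    | zero =>
      refine ⟨hx, ?_⟩
      simp only [newtonSeq, pow_zero, one_mul]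
      rw [abs_le]
      constructor <;> [linarith [hx.1, hwJ.2]; linarith [hx.2, hwJ.1]]
    | succ n ih =>
      obtain ⟨hmem, hbound⟩ := ih
      obtain ⟨hmem', hcontr⟩ := hstep _ hmem
      refine ⟨hmem', ?_⟩
      calc |newtonSeq g g' x (n+1) - w| = |newton g g' (newtonSeq g g' x n) - w| := rfl
        _ ≤ lam * |newtonSeq g g' x n - w| := hcontr
        _ ≤ (1/2) * ((1/2)^n * (d - c)) := by
            apply mul_le_mul hlam_half hbound (abs_nonneg _) (by norm_num)
        _ = (1/2)^(n+1) * (d - c) := by ring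
  refine ⟨fun n => ⟨(hseq n).1, hg'ne _ (hseq n).1⟩, w, hJ hwJ, hgw0, ?_⟩
  rw [tendsto_iff_dist_tendsto_zero]
  have hlim : Tendsto (fun n : ℕ => (1/2 : ℝ)^n * (d - c)) atTop (nhds 0) := by
    have := (tendsto_pow_atTop_nhds_zero_of_lt_one (by norm_num : (0:ℝ) ≤ 1/2)
      (by norm_num : (1/2:ℝ) < 1)).mul_const (d - c)
    simpa using this
  refine squeeze_zero (fun n => dist_nonneg) (fun n => ?_) hlim
  rw [Real.dist_eq]
  exact (hseq n).2
end

section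
/- Let a > 0, 0 < ε < 1/5, let J be a closed interval containing [z-ε, z+ε] where z = -b/a, let f(x) = ax + b on J, and let g : J → ℝ be differentiable with sup_{x∈J}(|f(x)-g(x)| + |f'(x)-g'(x)|) < aε. Then g has exactly one root w in J, and w satisfies z - ε < w < z + ε. -/
open Set

/-- If f(x) = ax + b with a > 0, z = -b/a, [z-ε, z+ε] ⊆ J = [c,d], 0 < ε < 1/5, and g is
a C¹ perturbation of f on J with pointwise d₁-error less than aε, then g has exactly one
root w in J, and z - ε < w < z + ε. -/
theorem stmt3 (a b ε : ℝ) (ha : 0 < a) (hε0 : 0 < ε) (hε : ε < 1 / 5)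
    (c d : ℝ) (hcd : c ≤ d)
    (z : ℝ) (hz : z = -b / a) (hzJ : Icc (z - ε) (z + ε) ⊆ Icc c d)
    (g g' : ℝ → ℝ)
    (hg : ∀ t ∈ Icc c d, HasDerivWithinAt g (g' t) (Icc c d) t)
    (hclose : ∀ t ∈ Icc c d, |(a * t + b) - g t| + |a - g' t| < a * ε) :
    ∃ w ∈ Icc c d, g w = 0 ∧ (∀ w' ∈ Icc c d, g w' = 0 → w' = w) ∧
      z - ε < w ∧ w < z + ε := by
  have hzb : a * z + b = 0 := by rw [hz]; field_simp; ring
  have hcont : ContinuousOn g (Icc c d) := fun t ht => (hg t ht).continuousWithinAt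
  have hmono : StrictMonoOn g (Icc c d) := by
    apply strictMonoOn_of_hasDerivWithinAt_pos (convex_Icc c d) hcont
      (fun x hx => (hg x (interior_subset hx)).mono interior_subset)
    intro x hx
    have h := hclose x (interior_subset hx)
    have h1 : |a - g' x| < a * ε := lt_of_le_of_lt (le_add_of_nonneg_left (abs_nonneg _)) h
    have := abs_lt.mp h1
    nlinarith
  have hmem1 : z - ε ∈ Icc c d := hzJ ⟨le_refl _, by linarith⟩
  have hmem2 : z + ε ∈ Icc c d := hzJ ⟨by linarith, le_refl _⟩
  have hg1 : g (z - ε) < 0 := by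
    have h := hclose (z - ε) hmem1
    have h1 : |(a * (z - ε) + b) - g (z - ε)| < a * ε :=
      lt_of_le_of_lt (le_add_of_nonneg_right (abs_nonneg _)) h
    have := abs_lt.mp h1
    nlinarith
  have hg2 : 0 < g (z + ε) := by
    have h := hclose (z + ε) hmem2
    have h1 : |(a * (z + ε) + b) - g (z + ε)| < a * ε :=
      lt_of_le_of_lt (le_add_of_nonneg_right (abs_nonneg _)) h
    have := abs_lt.mp h1
    nlinarith
  have hsub : Icc (z - ε) (z + ε) ⊆ Icc c d := hzJ
  obtain ⟨w, hw, hgw⟩ := intermediate_value_Icc (by linarith : z - ε ≤ z + ε)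
    (hcont.mono hsub) ⟨hg1.le, hg2.le⟩
  refine ⟨w, hsub hw, hgw, fun w' hw' hgw' => ?_, ?_, ?_⟩
  · rcases lt_trichotomy w' w with h | h | h
    · exact absurd (hmono hw' (hsub hw) h) (by rw [hgw, hgw']; simp)
    · exact h
    · exact absurd (hmono (hsub hw) hw' h) (by rw [hgw, hgw']; simp)
  · rcases eq_or_lt_of_le hw.1 with h | h
    · exact absurd hgw (by rw [← h]; linarith)
    · exact h
  · rcases eq_or_lt_of_le hw.2 with h | h
    · exact absurd hgw (by rw [h]; linarith)
    · exact h
end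

section
/- Let f ∈ C¹(M) be affine and nonconstant on a nondegenerate closed interval J ⊆ [-M,M] with N(f,J) ∉ J. Then there exists r > 0 with the following property: for every δ > 0, every x in the interior of J, and every y ∈ ℝ with |y - N(f,J)| < r, there exists g ∈ C¹(M) such that (i) d₁(f,g) < ε, (ii) f(t) = g(t) for all t ∈ [-M,M] outside (x-δ, x+δ), (iii) g is affine and nonconstant on some neighbourhood of x, and (iv) N(g,x) = y. Here ε > 0 is given in advance of choosing r. -/
/-!
Add to `f` the perturbation `m δ h((t - x) / δ)`, where `h` is a smooth plateau function equal to
the identity near `0` and vanishing off `(-1, 1)`. Near `x` the perturbed function `g` is still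
affine, with value `a x + b` at `x` and slope `a + m`, so `N(g, x) = x - (a x + b) / (a + m)`,
which equals `y` for `m = (b + a y) / (x - y)`. As `N(f, J)` lies at positive distance from the
closed interval `J`, `|x - y|` is bounded below uniformly in `x ∈ J` for `y` near `N(f, J)`, hence
`m` is small; for `δ ≤ 1` the `C¹` size of the perturbation is at most `|m|` times a bound for
`|h| + |h'|`.
-/

open Set

open Topology Metric
open scoped ContDiff

noncomputable section

def plateauCutoff : ContDiffBump (0 : ℝ) := ⟨1 / 2, 1, by norm_num, by norm_num⟩

def plateau (u : ℝ) : ℝ := u * plateauCutoff u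

lemma contDiff_plateau : ContDiff ℝ ∞ plateau :=
  contDiff_id.mul plateauCutoff.contDiff

lemma plateau_eq_self {u : ℝ} (hu : |u| ≤ 1 / 2) : plateau u = u := by
  rw [plateau, plateauCutoff.one_of_mem_closedBall (by simpa [plateauCutoff] using hu), mul_one]

lemma deriv_plateau_eq_one {u : ℝ} (hu : |u| < 1 / 2) : deriv plateau u = 1 := by
  have h : plateau =ᶠ[𝓝 u] id :=
    (plateauCutoff.eventuallyEq_one_of_mem_ball (by simpa [plateauCutoff] using hu)).mono
      fun v hv => by simp [plateau, hv]
  rw [h.deriv_eq, deriv_id]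

lemma plateau_eq_zero {u : ℝ} (hu : 1 ≤ |u|) : plateau u = 0 := by
  rw [plateau, plateauCutoff.zero_of_le_dist (by simpa [plateauCutoff] using hu), mul_zero]

lemma exists_bound_plateau : ∃ C > 0, ∀ u, |plateau u| + |deriv plateau u| ≤ C := by
  have hsupp : HasCompactSupport plateau := plateauCutoff.hasCompactSupport.mul_left
  obtain ⟨C₀, hC₀⟩ := contDiff_plateau.continuous.bounded_above_of_compact_support hsupp
  obtain ⟨C₁, hC₁⟩ :=
    (contDiff_plateau.continuous_deriv (by simp)).bounded_above_of_compact_support hsupp.deriv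
  refine ⟨|C₀| + |C₁| + 1, by positivity, fun u => ?_⟩
  have h₀ := hC₀ u
  have h₁ := hC₁ u
  rw [Real.norm_eq_abs] at h₀ h₁
  linarith [le_abs_self C₀, le_abs_self C₁]

def localBump (x δ t : ℝ) : ℝ := δ * plateau ((t - x) / δ)

section LocalBump

variable {x δ t : ℝ}

lemma contDiff_localBump : ContDiff ℝ ∞ (localBump x δ) :=
  contDiff_const.mul (contDiff_plateau.comp ((contDiff_id.sub contDiff_const).div_const δ))

lemma deriv_localBump (hδ : δ ≠ 0) :
    deriv (localBump x δ) t = deriv plateau ((t - x) / δ) := by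
  have hin : HasDerivAt (fun t => (t - x) / δ) (1 / δ) t :=
    ((hasDerivAt_id t).sub_const x).div_const δ
  have h := (((contDiff_plateau.differentiable (by simp)) _).hasDerivAt.comp t hin).const_mul δ
  refine h.deriv.trans ?_
  field_simp

lemma localBump_eq_zero (hδ : 0 < δ) (ht : t ∉ Ioo (x - δ) (x + δ)) :
    localBump x δ t = 0 := by
  rw [← Real.ball_eq_Ioo, mem_ball, not_lt, Real.dist_eq] at ht
  rw [localBump, plateau_eq_zero, mul_zero]
  rwa [abs_div, abs_of_pos hδ, one_le_div hδ]

lemma localBump_eq_sub (hδ : 0 < δ) (ht : |t - x| ≤ δ / 2) : localBump x δ t = t - x := by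
  rw [localBump, plateau_eq_self]
  · field_simp
  · rw [abs_div, abs_of_pos hδ, div_le_iff₀ hδ]; linarith

lemma deriv_localBump_eq_one (hδ : 0 < δ) (ht : |t - x| < δ / 2) :
    deriv (localBump x δ) t = 1 := by
  rw [deriv_localBump hδ.ne', deriv_plateau_eq_one]
  rw [abs_div, abs_of_pos hδ, div_lt_iff₀ hδ]; linarith

lemma abs_localBump_add_abs_deriv_le {C : ℝ} (hC : ∀ u, |plateau u| + |deriv plateau u| ≤ C)
    (hδ : 0 < δ) (hδ₁ : δ ≤ 1) : |localBump x δ t| + |deriv (localBump x δ) t| ≤ C := by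
  have h := hC ((t - x) / δ)
  rw [localBump, deriv_localBump hδ.ne', abs_mul, abs_of_pos hδ]
  nlinarith [abs_nonneg (plateau ((t - x) / δ))]

variable {f f' : ℝ → ℝ} {s : Set ℝ} {m : ℝ}

lemma HasDerivWithinAt.add_mul_localBump (hf : HasDerivWithinAt f (f' t) s t) :
    HasDerivWithinAt (fun t => f t + m * localBump x δ t)
      (f' t + m * deriv (localBump x δ) t) s t :=
  hf.add (((contDiff_localBump.differentiable (by simp)) t).hasDerivAt.const_mul m).hasDerivWithinAt

lemma ContinuousOn.add_mul_deriv_localBump (hf' : ContinuousOn f' s) :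
    ContinuousOn (fun t => f' t + m * deriv (localBump x δ) t) s :=
  hf'.add (continuous_const.mul (contDiff_localBump.continuous_deriv (by simp))).continuousOn

lemma abs_sub_add_mul_localBump_le {C : ℝ} (hC : ∀ u, |plateau u| + |deriv plateau u| ≤ C)
    (hδ : 0 < δ) (hδ₁ : δ ≤ 1) :
    |f t - (f t + m * localBump x δ t)| + |f' t - (f' t + m * deriv (localBump x δ) t)| ≤
      |m| * C :=
  calc _ = |m| * (|localBump x δ t| + |deriv (localBump x δ) t|) := by
          simp only [sub_add_cancel_left, abs_neg, abs_mul]; ring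
    _ ≤ |m| * C := by gcongr; exact abs_localBump_add_abs_deriv_le hC hδ hδ₁

lemma add_mul_localBump_of_affine {a b : ℝ} (hδ : 0 < δ) (ht : |t - x| < δ / 2)
    (hf : f t = a * t + b) (hf' : f' t = a) :
    f t + m * localBump x δ t = (a + m) * t + (b - m * x) ∧
      f' t + m * deriv (localBump x δ) t = a + m := by
  rw [hf, hf', localBump_eq_sub hδ ht.le, deriv_localBump_eq_one hδ ht]
  constructor <;> ring

lemma exists_perturbation_affine_near {a b C ε : ℝ}
    (hf : ∀ t ∈ s, HasDerivWithinAt f (f' t) s t) (hf' : ContinuousOn f' s)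
    (hδ : 0 < δ) (hδ₁ : δ ≤ 1)
    (haff : ∀ t ∈ Icc (x - δ) (x + δ), f t = a * t + b ∧ f' t = a)
    (hC : ∀ u, |plateau u| + |deriv plateau u| ≤ C) (hm : |m| * C < ε) :
    ∃ g g' : ℝ → ℝ, (∀ t ∈ s, HasDerivWithinAt g (g' t) s t) ∧ ContinuousOn g' s ∧
      (∀ t, |f t - g t| + |f' t - g' t| < ε) ∧ (∀ t ∉ Ioo (x - δ) (x + δ), f t = g t) ∧
      ∀ t ∈ Icc (x - δ / 4) (x + δ / 4),
        g t = (a + m) * t + (b - m * x) ∧ g' t = a + m := by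
  refine ⟨fun t => f t + m * localBump x δ t, fun t => f' t + m * deriv (localBump x δ) t,
    fun t ht => (hf t ht).add_mul_localBump, hf'.add_mul_deriv_localBump,
    fun t => (abs_sub_add_mul_localBump_le hC hδ hδ₁).trans_lt hm,
    fun t ht => by simp [localBump_eq_zero hδ ht], fun t ht => ?_⟩
  have htx : |t - x| < δ / 2 := abs_sub_lt_iff.mpr ⟨by linarith [ht.2], by linarith [ht.1]⟩
  have htJ : t ∈ Icc (x - δ) (x + δ) := ⟨by linarith [ht.1], by linarith [ht.2]⟩
  exact add_mul_localBump_of_affine hδ htx (haff t htJ).1 (haff t htJ).2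

end LocalBump

lemma exists_forall_le_dist_of_notMem {α : Type*} [PseudoMetricSpace α] {K : Set α} {p : α}
    (hK : IsClosed K) (hp : p ∉ K) :
    ∃ ρ > 0, ∀ x ∈ K, ∀ y, dist y p < ρ → ρ ≤ dist x y := by
  obtain ⟨ε, hε, hball⟩ := Metric.isOpen_iff.mp hK.isOpen_compl p hp
  refine ⟨ε / 2, by positivity, fun x hx y hy => ?_⟩
  have hxp : ε ≤ dist x p := not_lt.mp fun h => hball (mem_ball.mpr h) hx
  linarith [dist_triangle x y p]

lemma add_div_sub_eq {a b x y : ℝ} (hxy : x ≠ y) :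
    a + (b + a * y) / (x - y) = (a * x + b) / (x - y) := by
  have hs : x - y ≠ 0 := sub_ne_zero.mpr hxy
  field_simp; ring

lemma abs_div_sub_mul_lt {a b x y ρ C ε : ℝ} (ha : a ≠ 0) (hρ : 0 < ρ) (hC : 0 < C)
    (hxy : ρ ≤ |x - y|) (hy : |y - -b / a| < ε * ρ / (|a| * C)) :
    |(b + a * y) / (x - y)| * C < ε := by
  have hnum : |b + a * y| = |a| * |y - -b / a| := by
    rw [← abs_mul]; congr 1; field_simp; ring
  rw [lt_div_iff₀ (by positivity)] at hy
  calc |(b + a * y) / (x - y)| * C ≤ |a| * |y - -b / a| / ρ * C := by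
        rw [abs_div, hnum]; gcongr
    _ < ε := by rw [div_mul_eq_mul_div, div_lt_iff₀ hρ]; linarith

end

theorem stmt4_general (M : ℝ) (f f' : ℝ → ℝ)
    (hf : ∀ t ∈ Icc (-M) M, HasDerivWithinAt f (f' t) (Icc (-M) M) t)
    (hf' : ContinuousOn f' (Icc (-M) M))
    (c d : ℝ)
    (a b : ℝ) (ha : a ≠ 0)
    (haff : ∀ t ∈ Icc c d, f t = a * t + b ∧ f' t = a)
    (hout : -b / a ∉ Icc c d)
    (ε : ℝ) (hε : 0 < ε) :
    ∃ r > 0, ∀ δ > 0, ∀ x ∈ Ioo c d, ∀ y : ℝ, |y - (-b / a)| < r →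
      ∃ g g' : ℝ → ℝ,
        (∀ t ∈ Icc (-M) M, HasDerivWithinAt g (g' t) (Icc (-M) M) t) ∧
        ContinuousOn g' (Icc (-M) M) ∧
        (∀ t ∈ Icc (-M) M, |f t - g t| + |f' t - g' t| < ε) ∧
        (∀ t ∈ Icc (-M) M, t ∉ Ioo (x - δ) (x + δ) → f t = g t) ∧
        (∃ γ > 0, ∃ a' b' : ℝ, a' ≠ 0 ∧
          ∀ s ∈ Icc (x - γ) (x + γ), g s = a' * s + b' ∧ g' s = a') ∧
        g' x ≠ 0 ∧ newton g g' x = y := by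
  obtain ⟨C, hC, hbound⟩ := exists_bound_plateau
  obtain ⟨ρ, hρ, hsep⟩ := exists_forall_le_dist_of_notMem isClosed_Icc hout
  refine ⟨min ρ (ε * ρ / (|a| * C)), by positivity, fun δ hδ x hx y hy => ?_⟩
  have hxJ : x ∈ Icc c d := Ioo_subset_Icc_self hx
  have hxy : ρ ≤ |x - y| := by
    have h := hsep x hxJ y
    simp only [Real.dist_eq] at h
    exact h (hy.trans_le (min_le_left _ _))
  have hxy' : x ≠ y := fun h => by simp [h] at hxy; linarith
  have hv : a * x + b ≠ 0 := fun h => hout (by rwa [show -b / a = x by field_simp; linarith])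
  -- the tangent line at `x` of slope `a + m` through `(x, a x + b)` has its zero at `y`
  set m := (b + a * y) / (x - y)
  have hmC : |m| * C < ε := abs_div_sub_mul_lt ha hρ hC hxy (hy.trans_le (min_le_right _ _))
  have hslope : a + m = (a * x + b) / (x - y) := add_div_sub_eq hxy'
  have hm₀ : a + m ≠ 0 := hslope ▸ div_ne_zero hv (sub_ne_zero.mpr hxy')
  set δ' := min (min δ 1) (min (x - c) (d - x))
  have hδ' : 0 < δ' := lt_min (lt_min hδ one_pos) (lt_min (sub_pos.2 hx.1) (sub_pos.2 hx.2))
  have hδ'δ : δ' ≤ δ := (min_le_left _ _).trans (min_le_left _ _)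
  have hδ'1 : δ' ≤ 1 := (min_le_left _ _).trans (min_le_right _ _)
  have hδ'J : δ' ≤ x - c ∧ δ' ≤ d - x := le_min_iff.mp (min_le_right _ _)
  have hJ' : Icc (x - δ') (x + δ') ⊆ Icc c d :=
    Icc_subset_Icc (by linarith [hδ'J.1]) (by linarith [hδ'J.2])
  obtain ⟨g, g', hg, hg', hclose, hagree, hlin⟩ :=
    exists_perturbation_affine_near hf hf' hδ' hδ'1 (fun t ht => haff t (hJ' ht)) hbound hmC
  have hx₀ : x ∈ Icc (x - δ' / 4) (x + δ' / 4) := ⟨by linarith, by linarith⟩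
  refine ⟨g, g', hg, hg', fun t _ => hclose t,
    fun t _ ht => hagree t fun h => ht (Ioo_subset_Ioo (by linarith) (by linarith) h),
    ⟨δ' / 4, by positivity, a + m, b - m * x, hm₀, hlin⟩,
    (hlin x hx₀).2.trans_ne hm₀, ?_⟩
  rw [newton, (hlin x hx₀).1, (hlin x hx₀).2,
    show (a + m) * x + (b - m * x) = a * x + b by ring, hslope, div_div_cancel₀ hv]
  ring

/-- Lemma: let f ∈ C¹(M) be affine nonconstant (f(t) = at+b) on a nondegenerate closed
interval J = [c,d] ⊆ [-M,M], with N(f,J) = -b/a ∉ J, and let ε > 0. Then there is r > 0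
such that for all δ > 0, x ∈ Int J, and y with |y - N(f,J)| < r, there exists g ∈ C¹(M)
with d₁(f,g) < ε, agreeing with f outside (x-δ, x+δ), affine nonconstant on a
neighbourhood of x, and with N(g,x) = y. -/
theorem stmt4 (M : ℝ) (hM : 0 < M) (f f' : ℝ → ℝ)
    (hf : ∀ t ∈ Icc (-M) M, HasDerivWithinAt f (f' t) (Icc (-M) M) t)
    (hf' : ContinuousOn f' (Icc (-M) M))
    (c d : ℝ) (hcd : c < d) (hJ : Icc c d ⊆ Icc (-M) M)
    (a b : ℝ) (ha : a ≠ 0)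
    (haff : ∀ t ∈ Icc c d, f t = a * t + b ∧ f' t = a)
    (hout : -b / a ∉ Icc c d)
    (ε : ℝ) (hε : 0 < ε) :
    ∃ r > 0, ∀ δ > 0, ∀ x ∈ Ioo c d, ∀ y : ℝ, |y - (-b / a)| < r →
      ∃ g g' : ℝ → ℝ,
        (∀ t ∈ Icc (-M) M, HasDerivWithinAt g (g' t) (Icc (-M) M) t) ∧
        ContinuousOn g' (Icc (-M) M) ∧
        (∀ t ∈ Icc (-M) M, |f t - g t| + |f' t - g' t| < ε) ∧
        (∀ t ∈ Icc (-M) M, t ∉ Ioo (x - δ) (x + δ) → f t = g t) ∧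
        (∃ γ > 0, ∃ a' b' : ℝ, a' ≠ 0 ∧
          ∀ s ∈ Icc (x - γ) (x + γ), g s = a' * s + b' ∧ g' s = a') ∧
        g' x ≠ 0 ∧ newton g g' x = y :=
  stmt4_general M f f' hf hf' c d a b ha haff hout ε hε
end
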